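/- arXiv:2002.04732 — 2 statements merged into one kernel-verified Lean document; each statement's English description precedes it below -/
import Mathlib

section
/- The relative α-entropy is nonnegative: for probability mass functions p, q on a finite set X and α > 0 with α ≠ 1, I_α(p,q) ≥ 0, with equality if and only if p = q. -/
open Real Finset

/-- Nonnegativity of the relative α-entropy, with equality iff p = q. -/
theorem relAlphaEntropy_nonneg {X : Type*} [Fintype X] [Nonempty X]
    (p q : X → ℝ) (hp : ∀ x, 0 < p x) (hq : ∀ x, 0 < q x)
    (hps : ∑ x, p x = 1) (hqs : ∑ x, q x = 1)
    (α : ℝ) (hα : 0 < α) (hα1 : α ≠ 1) :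
    (0 ≤ (α / (1 - α)) * Real.log (∑ x, p x * (q x) ^ (α - 1))
          - (1 / (1 - α)) * Real.log (∑ x, (p x) ^ α)
          + Real.log (∑ x, (q x) ^ α))
    ∧ ((α / (1 - α)) * Real.log (∑ x, p x * (q x) ^ (α - 1))
          - (1 / (1 - α)) * Real.log (∑ x, (p x) ^ α)
          + Real.log (∑ x, (q x) ^ α) = 0 ↔ p = q) := by
  have h1α : (1 : ℝ) - α ≠ 0 := fun h => hα1 (by linarith)
  set A := ∑ x, p x * (q x) ^ (α - 1) with hAdef
  set B := ∑ x, (p x) ^ α with hBdef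
  set C := ∑ x, (q x) ^ α with hCdef
  have hApos : 0 < A :=
    Finset.sum_pos (fun x _ => mul_pos (hp x) (rpow_pos_of_pos (hq x) _)) univ_nonempty
  have hBpos : 0 < B :=
    Finset.sum_pos (fun x _ => rpow_pos_of_pos (hp x) _) univ_nonempty
  have hCpos : 0 < C :=
    Finset.sum_pos (fun x _ => rpow_pos_of_pos (hq x) _) univ_nonempty
  set w : X → ℝ := fun x => (q x) ^ α / C with hwdef
  set t : X → ℝ := fun x => p x / q x with htdef
  have hwpos : ∀ x : X, 0 < w x := fun x => div_pos (rpow_pos_of_pos (hq x) _) hCpos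
  have hws : ∑ x, w x = 1 := by
    simp only [hwdef, ← Finset.sum_div]
    rw [← hCdef, div_self hCpos.ne']
  have htpos : ∀ x : X, 0 < t x := fun x => div_pos (hp x) (hq x)
  set r := A / C with hrdef
  have hrpos : 0 < r := div_pos hApos hCpos
  set D := B / C with hDdef
  have hDpos : 0 < D := div_pos hBpos hCpos
  have hwt : ∑ x, w x • t x = r := by
    rw [hrdef, hAdef, Finset.sum_div]
    refine Finset.sum_congr rfl fun x _ => ?_
    simp only [hwdef, htdef, smul_eq_mul]
    rw [Real.rpow_sub_one (hq x).ne']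
    field_simp
  have hwtα : ∑ x, w x • (t x) ^ α = D := by
    rw [hDdef, hBdef, Finset.sum_div]
    refine Finset.sum_congr rfl fun x _ => ?_
    simp only [hwdef, htdef, smul_eq_mul]
    rw [Real.div_rpow (hp x).le (hq x).le]
    field_simp [(rpow_pos_of_pos (hq x) α).ne']
  -- Jensen, in both cases
  have key : (0 ≤ (α * Real.log r - Real.log D) / (1 - α)) ∧
      ((α * Real.log r - Real.log D) / (1 - α) = 0 ↔ ∀ x : X, t x = r) := by
    have hlogeq : α * Real.log r - Real.log D = 0 ↔ r ^ α = D := by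
      rw [← Real.log_rpow hrpos, sub_eq_zero]
      exact ⟨fun h => Real.log_injOn_pos (Set.mem_Ioi.2 (rpow_pos_of_pos hrpos _))
        (Set.mem_Ioi.2 hDpos) h, fun h => by rw [h]⟩
    rcases lt_or_gt_of_ne hα1 with hlt | hgt
    · -- α < 1 : concave case, D ≤ r ^ α
      have hcc := Real.strictConcaveOn_rpow hα hlt
      have hle : D ≤ r ^ α := by
        have := hcc.concaveOn.le_map_sum (t := Finset.univ) (w := w) (p := t)
          (fun i _ => (hwpos i).le) hws (fun i _ => Set.mem_Ici.2 (htpos i).le)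
        rwa [hwt, hwtα] at this
      have heq := hcc.map_sum_eq_iff (t := Finset.univ) (w := w) (p := t)
        (fun i _ => hwpos i) hws (fun i _ => Set.mem_Ici.2 (htpos i).le)
      rw [hwt, hwtα] at heq
      constructor
      · apply div_nonneg _ (by linarith)
        have : Real.log D ≤ Real.log (r ^ α) := Real.log_le_log hDpos hle
        rw [Real.log_rpow hrpos] at this
        linarith
      · rw [div_eq_zero_iff]
        constructor
        · rintro (h | h)
          · rw [hlogeq] at h
            simpa using heq.1 h
          · exact absurd h h1α
        · intro h
          left
          rw [hlogeq]
          exact heq.2 (by simpa using h)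
    · -- 1 < α : convex case, r ^ α ≤ D
      have hcv := strictConvexOn_rpow hgt
      have hle : r ^ α ≤ D := by
        have := hcv.convexOn.map_sum_le (t := Finset.univ) (w := w) (p := t)
          (fun i _ => (hwpos i).le) hws (fun i _ => Set.mem_Ici.2 (htpos i).le)
        rwa [hwt, hwtα] at this
      have heq := hcv.map_sum_eq_iff (t := Finset.univ) (w := w) (p := t)
        (fun i _ => hwpos i) hws (fun i _ => Set.mem_Ici.2 (htpos i).le)
      rw [hwt, hwtα] at heq
      constructor
      · rw [div_nonneg_iff]
        right
        constructor
        · have : Real.log (r ^ α) ≤ Real.log D := Real.log_le_log (rpow_pos_of_pos hrpos _) hle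
          rw [Real.log_rpow hrpos] at this
          linarith
        · linarith
      · rw [div_eq_zero_iff]
        constructor
        · rintro (h | h)
          · rw [hlogeq] at h
            simpa using heq.1 h
          · exact absurd h h1α
        · intro h
          left
          rw [hlogeq]
          exact heq.2 (by simpa using h)
  -- rewrite the entropy expression
  have hI : (α / (1 - α)) * Real.log A - (1 / (1 - α)) * Real.log B + Real.log C
      = (α * Real.log r - Real.log D) / (1 - α) := by
    rw [hrdef, hDdef, Real.log_div hApos.ne' hCpos.ne', Real.log_div hBpos.ne' hCpos.ne']
    field_simp
    ring
  -- final equivalence with p = q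
  have hpq : (∀ x : X, t x = r) ↔ p = q := by
    constructor
    · intro h
      have hpx : ∀ x : X, p x = r * q x := fun x => by
        have hx := h x
        simp only [htdef] at hx
        exact (div_eq_iff (hq x).ne').1 hx
      have hsum : (1 : ℝ) = r := by
        calc (1 : ℝ) = ∑ x, p x := hps.symm
          _ = ∑ x, r * q x := Finset.sum_congr rfl fun x _ => hpx x
          _ = r * ∑ x, q x := by rw [Finset.mul_sum]
          _ = r := by rw [hqs, mul_one]
      funext x
      rw [hpx x, ← hsum, one_mul]
    · rintro rfl
      have hAC : A = C := by
        refine Finset.sum_congr rfl fun x _ => ?_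
        rw [Real.rpow_sub_one (hq x).ne', mul_comm, div_mul_cancel₀ _ (hq x).ne']
      intro x
      simp only [htdef]
      rw [hrdef, hAC, div_self hCpos.ne', div_self (hq x).ne']
  rw [hI]
  exact ⟨key.1, key.2.trans hpq⟩
end

section
/- The α-representation identity: (1/(α-1)) · ∂/∂θ' [ p_{θ'}(x)^{α-1} / Σ_y p_θ(y) p_{θ'}(y)^{α-1} ] evaluated at θ' = θ equals (p_θ^{(α)}(x)/p_θ(x)) [ ∂_θ log p_θ(x) - E_{p_θ^{(α)}}[∂_θ log p_θ(X)] ]. -/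
open Real Finset

/-!
With the score `s = ∂_θ log p_θ`, differentiating `θ' ↦ p_{θ'}(y) ^ β` at `θ` gives
`β p_θ(y) ^ β s(y)`. At `θ' = θ` the denominator is the escort normalizer `Σ_y p_θ(y) ^ α`, and its
derivative `(α - 1) Σ_y p_θ(y) ^ α s(y)` is that normalizer times `α - 1` times the escort mean of
the score, so the quotient rule yields the centred score weighted by `p_θ^{(α)}(x) / p_θ(x)`.
-/

section Escort

variable {X : Type*} [Fintype X]

/-- The escort distribution `q^{(α)}`. -/
noncomputable def escort (q : X → ℝ) (α : ℝ) (x : X) : ℝ :=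
  q x ^ α / ∑ y, q y ^ α

theorem escort_mul_sum_rpow {q : X → ℝ} {α : ℝ} (hZ : ∑ y, q y ^ α ≠ 0) (x : X) :
    escort q α x * ∑ y, q y ^ α = q x ^ α :=
  div_mul_cancel₀ _ hZ

theorem escort_div_self {q : X → ℝ} {α : ℝ} {x : X} (hx : q x ≠ 0) :
    escort q α x / q x = q x ^ (α - 1) / ∑ y, q y ^ α := by
  rw [escort, rpow_sub_one hx, div_right_comm]

theorem sum_rpow_mul_eq_sum_rpow_mul_escort {q : X → ℝ} {α : ℝ} (hZ : ∑ y, q y ^ α ≠ 0)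
    (s : X → ℝ) :
    ∑ y, q y ^ α * s y = (∑ y, q y ^ α) * ∑ y, escort q α y * s y := by
  rw [mul_sum]
  refine sum_congr rfl fun y _ => ?_
  rw [← escort_mul_sum_rpow hZ y]
  ring

theorem mul_rpow_sub_one_self {a : ℝ} (ha : a ≠ 0) (α : ℝ) : a * a ^ (α - 1) = a ^ α := by
  rw [rpow_sub_one ha, mul_div_cancel₀ _ ha]

theorem HasDerivAt.rpow_const_of_pos {f : ℝ → ℝ} {f' t : ℝ} (hf : HasDerivAt f f' t)
    (hpos : 0 < f t) (β : ℝ) :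
    HasDerivAt (fun s => f s ^ β) (β * f t ^ β * (f' / f t)) t :=
  (hf.rpow_const (Or.inl hpos.ne')).congr_deriv (by rw [rpow_sub_one hpos.ne']; ring)

theorem hasDerivAt_sum_mul_rpow {q : ℝ → X → ℝ} {dq : X → ℝ} {t : ℝ}
    (hq : ∀ y, HasDerivAt (fun s => q s y) (dq y) t) (hpos : ∀ y, 0 < q t y)
    (w : X → ℝ) (β : ℝ) :
    HasDerivAt (fun s => ∑ y, w y * q s y ^ β)
      (β * ∑ y, w y * q t y ^ β * (dq y / q t y)) t := by
  rw [mul_sum]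
  refine HasDerivAt.fun_sum fun y _ => ?_
  exact (((hq y).rpow_const_of_pos (hpos y) β).const_mul (w y)).congr_deriv (by ring)

end Escort

theorem alpha_representation_identity_general {X : Type*} [Fintype X]
    (p : ℝ → X → ℝ) (θ₀ : ℝ) (dp : X → ℝ)
    (hpos : ∀ θ x, 0 < p θ x)
    (hderiv : ∀ x, HasDerivAt (fun θ => p θ x) (dp x) θ₀)
    (α : ℝ) (x : X) :
    HasDerivAt
      (fun θ' => (p θ' x) ^ (α - 1) / (∑ y, p θ₀ y * (p θ' y) ^ (α - 1)))
      ((α - 1) *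
        (((p θ₀ x) ^ α / (∑ y, (p θ₀ y) ^ α)) / p θ₀ x *
          (dp x / p θ₀ x
            - ∑ y, ((p θ₀ y) ^ α / (∑ z, (p θ₀ z) ^ α)) * (dp y / p θ₀ y))))
      θ₀ := by
  have hne : ∀ y, p θ₀ y ≠ 0 := fun y => (hpos θ₀ y).ne'
  have hZ : 0 < ∑ y, p θ₀ y ^ α :=
    sum_pos (fun y _ => rpow_pos_of_pos (hpos θ₀ y) α) ⟨x, mem_univ x⟩
  have hden_eq : ∑ y, p θ₀ y * p θ₀ y ^ (α - 1) = ∑ y, p θ₀ y ^ α :=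
    sum_congr rfl fun y _ => mul_rpow_sub_one_self (hne y) α
  have hnum := (hderiv x).rpow_const_of_pos (hpos θ₀ x) (α - 1)
  have hden := hasDerivAt_sum_mul_rpow hderiv (hpos θ₀) (p θ₀) (α - 1)
  simp only [mul_rpow_sub_one_self (hne _), sum_rpow_mul_eq_sum_rpow_mul_escort hZ.ne'] at hden
  refine (hnum.div hden (hden_eq ▸ hZ.ne')).congr_deriv ?_
  change _ = (α - 1) * (escort (p θ₀) α x / p θ₀ x *
    (dp x / p θ₀ x - ∑ y, escort (p θ₀) α y * (dp y / p θ₀ y)))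
  rw [escort_div_self (hne x), hden_eq]
  field_simp

/-- The α-representation identity: the derivative at θ' = θ of the escort-type
expression equals (α-1) times the α-representation of ∂_θ. -/
theorem alpha_representation_identity {X : Type*} [Fintype X]
    (p : ℝ → X → ℝ) (θ₀ : ℝ) (dp : X → ℝ)
    (hpos : ∀ θ x, 0 < p θ x) (hsum : ∀ θ, ∑ x, p θ x = 1)
    (hderiv : ∀ x, HasDerivAt (fun θ => p θ x) (dp x) θ₀)
    (α : ℝ) (hα : 0 < α) (hα1 : α ≠ 1) (x : X) :
    HasDerivAt
      (fun θ' => (p θ' x) ^ (α - 1) / (∑ y, p θ₀ y * (p θ' y) ^ (α - 1)))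
      ((α - 1) *
        (((p θ₀ x) ^ α / (∑ y, (p θ₀ y) ^ α)) / p θ₀ x *
          (dp x / p θ₀ x
            - ∑ y, ((p θ₀ y) ^ α / (∑ z, (p θ₀ z) ^ α)) * (dp y / p θ₀ y))))
      θ₀ :=
  alpha_representation_identity_general p θ₀ dp hpos hderiv α x
end
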